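/- arXiv:1301.5109 — 4 statements merged into one kernel-verified Lean document; each statement's English description precedes it below -/
import Mathlib

section
/- Any point on the boundary of the convex hull of a compact set S ⊆ ℝ^d can be expressed as a convex combination of at most d points of S. -/
/-!
Since `S` is compact, so is its convex hull, hence `x` lies in the hull; as `x` is not an interior
point, a nonzero linear functional `f` attains its maximum over the hull at `x`. By Carathéodory,
`x` is a positive combination of affinely independent points of `S`, and positivity of the
weights forces each of them onto the hyperplane `f = f x`. Affinely independent points in a
hyperplane of `ℝ^d` number at most `d`.
-/

open Set Module

section LinearAlgebra

variable {𝕜 V : Type*} [Field 𝕜] [AddCommGroup V] [Module 𝕜 V] [FiniteDimensional 𝕜 V]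

theorem AffineIndependent.card_le_finrank_of_forall_eq {ι : Type*} [Fintype ι] {p : ι → V}
    (hp : AffineIndependent 𝕜 p) {f : V →ₗ[𝕜] 𝕜} (hf : f ≠ 0) {c : 𝕜}
    (hpf : ∀ i, f (p i) = c) : Fintype.card ι ≤ finrank 𝕜 V := by
  have hspan : vectorSpan 𝕜 (range p) ≤ LinearMap.ker f := by
    rw [vectorSpan_def, Submodule.span_le]
    rintro _ ⟨_, ⟨i, rfl⟩, _, ⟨j, rfl⟩, rfl⟩
    simp [hpf]
  have hker : finrank 𝕜 (LinearMap.ker f) < finrank 𝕜 V :=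
    Submodule.finrank_lt (LinearMap.ker_eq_top.not.2 hf)
  have := hp.card_le_finrank_succ
  have := Submodule.finrank_mono hspan
  omega

variable [LinearOrder 𝕜] [IsStrictOrderedRing 𝕜]

theorem convexHull_eq_image_stdSimplex {s : Set V} {s₀ : V} (hs₀ : s₀ ∈ s) :
    convexHull 𝕜 s = (fun p : (Fin (finrank 𝕜 V + 1) → 𝕜) × (Fin (finrank 𝕜 V + 1) → V) =>
      ∑ i, p.1 i • p.2 i) '' (stdSimplex 𝕜 _ ×ˢ univ.pi fun _ => s) := by
  refine Subset.antisymm (fun x hx => ?_) ?_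
  swap
  · rintro _ ⟨⟨W, Z⟩, ⟨⟨hW0, hW1⟩, hZ⟩, rfl⟩
    exact (convex_convexHull 𝕜 s).sum_mem (fun j _ => hW0 j) hW1
      fun j _ => subset_convexHull 𝕜 s (hZ j (mem_univ j))
  obtain ⟨ι, _, z, w, hzs, hz, hw0, hw1, hwx⟩ := eq_pos_convex_span_of_mem_convexHull hx
  have hcard : Fintype.card ι ≤ Fintype.card (Fin (finrank 𝕜 V + 1)) := by
    simpa using hz.card_le_finrank_succ.trans
      (Nat.succ_le_succ (Submodule.finrank_le (vectorSpan 𝕜 (range z))))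
  obtain ⟨e⟩ := Function.Embedding.nonempty_of_card_le hcard
  -- the unused slots get the point `s₀` with weight zero
  let W := Function.extend e w 0
  let Z := Function.extend e z fun _ => s₀
  have hW : ∀ i, W (e i) = w i := fun i => e.injective.extend_apply _ _ i
  have hZ : ∀ i, Z (e i) = z i := fun i => e.injective.extend_apply _ _ i
  have hW₀ : ∀ j ∉ range e, W j = 0 := fun j hj => Function.extend_apply' _ _ _ (by simpa using hj)
  have hZ₀ : ∀ j ∉ range e, Z j = s₀ := fun j hj => Function.extend_apply' _ _ _ (by simpa using hj)
  refine ⟨(W, Z), ⟨⟨fun j => ?_, ?_⟩, fun j _ => ?_⟩, ?_⟩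
  · by_cases hj : j ∈ range e
    · obtain ⟨i, rfl⟩ := hj
      simpa [hW] using (hw0 i).le
    · exact (hW₀ j hj).ge
  · rw [← hw1]
    exact (Fintype.sum_of_injective e e.injective w W hW₀ fun i => (hW i).symm).symm
  · by_cases hj : j ∈ range e
    · obtain ⟨i, rfl⟩ := hj
      simpa [hZ] using hzs (mem_range_self i)
    · simpa [hZ₀ j hj] using hs₀
  · rw [← hwx]
    refine (Fintype.sum_of_injective e e.injective _ _ (fun j hj => ?_) fun i => ?_).symm
    · simp [hW₀ j hj]
    · simp [hW, hZ]

theorem exists_finset_card_le_finrank_of_forall_le {s : Set V} {x : V}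
    (hx : x ∈ convexHull 𝕜 s) {f : V →ₗ[𝕜] 𝕜} (hf : f ≠ 0) (hs : ∀ y ∈ s, f y ≤ f x) :
    ∃ t : Finset V, ↑t ⊆ s ∧ t.card ≤ finrank 𝕜 V ∧ x ∈ convexHull 𝕜 (t : Set V) := by
  classical
  obtain ⟨ι, _, z, w, hzs, hz, hw0, hw1, hwx⟩ := eq_pos_convex_span_of_mem_convexHull hx
  have hzf : ∀ i, f (z i) = f x := by
    have hsum : ∑ i, w i * (f x - f (z i)) = 0 := by
      simp only [mul_sub, Finset.sum_sub_distrib, ← Finset.sum_mul, hw1, one_mul, ← hwx,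
        map_sum, map_smul, smul_eq_mul, sub_self]
    have hterm := (Finset.sum_eq_zero_iff_of_nonneg fun i _ =>
      mul_nonneg (hw0 i).le (sub_nonneg.2 (hs _ (hzs (mem_range_self i))))).1 hsum
    intro i
    linarith [(mul_eq_zero.1 (hterm i (Finset.mem_univ i))).resolve_left (hw0 i).ne']
  refine ⟨Finset.univ.image z, by simpa using hzs,
    Finset.card_image_le.trans (hz.card_le_finrank_of_forall_eq hf hzf), ?_⟩
  rw [Finset.coe_image, Finset.coe_univ, image_univ, ← hwx]
  exact (convex_convexHull 𝕜 _).sum_mem (fun i _ => (hw0 i).le) hw1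
    fun i _ => subset_convexHull 𝕜 _ (mem_range_self i)

end LinearAlgebra

theorem IsCompact.convexHull {E : Type*} [AddCommGroup E] [Module ℝ E] [FiniteDimensional ℝ E]
    [TopologicalSpace E] [ContinuousAdd E] [ContinuousSMul ℝ E] {s : Set E} (hs : IsCompact s) :
    IsCompact (convexHull ℝ s) := by
  obtain rfl | ⟨s₀, hs₀⟩ := s.eq_empty_or_nonempty
  · simp
  rw [convexHull_eq_image_stdSimplex hs₀]
  exact ((isCompact_stdSimplex ℝ _).prod (isCompact_univ_pi fun _ => hs)).image (by fun_prop)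

theorem Convex.exists_ne_zero_forall_le_of_mem_frontier {E : Type*} [NormedAddCommGroup E]
    [NormedSpace ℝ E] [FiniteDimensional ℝ E] {A : Set E} {x : E} (hA : Convex ℝ A)
    (hx : x ∈ frontier A) : ∃ f : StrongDual ℝ E, f ≠ 0 ∧ ∀ a ∈ A, f a ≤ f x := by
  obtain hint | hint := (interior A).eq_empty_or_nonempty
  swap
  · exact geometric_hahn_banach_of_nonempty_interior_point hA hx.2 hint
  -- otherwise `A` lies in a proper affine subspace, which is closed and hence contains `x`
  have hspan : affineSpan ℝ A ≠ ⊤ := fun h =>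
    (hA.interior_nonempty_iff_affineSpan_eq_top.2 h).ne_empty hint
  have hxspan : x ∈ affineSpan ℝ A :=
    closure_minimal (subset_affineSpan ℝ A) (AffineSubspace.closed_of_finiteDimensional _) hx.1
  have hdir : (affineSpan ℝ A).direction < ⊤ := lt_top_iff_ne_top.2 fun h =>
    hspan ((AffineSubspace.direction_eq_top_iff_of_nonempty ⟨x, hxspan⟩).1 h)
  obtain ⟨φ, hφ, hφdir⟩ := Submodule.exists_dual_map_eq_bot_of_lt_top hdir inferInstance
  refine ⟨LinearMap.toContinuousLinearMap φ, by simpa using hφ, fun a ha => le_of_eq ?_⟩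
  have hax := Submodule.mem_map_of_mem (f := φ)
    (AffineSubspace.vsub_mem_direction (subset_affineSpan ℝ A ha) hxspan)
  rw [hφdir, Submodule.mem_bot, vsub_eq_sub, map_sub, sub_eq_zero] at hax
  simpa using hax

/-- Any point on the boundary of the convex hull of a compact set `S ⊆ ℝ^d` can be
expressed as a convex combination of at most `d` points of `S`. -/
theorem stmt_0 (d : ℕ) (S : Set (EuclideanSpace ℝ (Fin d))) (hS : IsCompact S)
    (x : EuclideanSpace ℝ (Fin d)) (hx : x ∈ frontier (convexHull ℝ S)) :
    ∃ (t : Finset (EuclideanSpace ℝ (Fin d))) (w : EuclideanSpace ℝ (Fin d) → ℝ),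
      ↑t ⊆ S ∧ t.card ≤ d ∧ (∀ y ∈ t, 0 ≤ w y) ∧ (∑ y ∈ t, w y) = 1 ∧
      (∑ y ∈ t, w y • y) = x := by
  have hxS : x ∈ convexHull ℝ S := hS.convexHull.isClosed.frontier_subset hx
  obtain ⟨f, hf, hfx⟩ := (convex_convexHull ℝ S).exists_ne_zero_forall_le_of_mem_frontier hx
  obtain ⟨t, htS, htd, hxt⟩ := exists_finset_card_le_finrank_of_forall_le hxS
    (f := (f : EuclideanSpace ℝ (Fin d) →ₗ[ℝ] ℝ)) (ContinuousLinearMap.coe_injective.ne hf)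
    fun y hy => hfx y (subset_convexHull ℝ S hy)
  obtain ⟨w, hw0, hw1, hwx⟩ := Finset.mem_convexHull'.1 hxt
  exact ⟨t, w, htS, by simpa using htd, hw0, hw1, hwx⟩
end

section
/- For any real constant 0 ≤ τ < 1, the limit as n → ∞ of (1/n)·log₂(C_n(arccos τ)/C_n(π)) equals (1/2)·log₂(1 − τ²), where C_n(θ) is the surface area of a spherical cap of half-angle θ on the unit n-sphere. -/
/-!
Write `m = n - 2` and `s = sin θ = √(1 - τ²)` for `θ = arccos τ ∈ (0, π/2]`. On `[0, θ]` we have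
`sin^m φ · cos φ ≤ sin^m φ ≤ s^m`, so the cap integral lies between `s^(m+1)/(m+1)` and `θ s^m`,
while the full integral `∫₀^π sin^m` lies between `1/(m+1)` and `π`. The ratio is therefore `s^n`
up to factors polynomial in `n`, which disappear after taking `(1/n) log`.
-/

open scoped BigOperators

/-- Surface area of the spherical cap of half-angle `θ` on the unit `n`-sphere,
up to the dimensional constant `A_{n-1}` (which cancels in all ratios considered):
`C_n(θ) = A_{n-1} ∫₀^θ sin^{n-2}(φ) dφ`. -/
noncomputable def capC (n : ℕ) (θ : ℝ) : ℝ :=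
  ∫ φ in (0:ℝ)..θ, (Real.sin φ) ^ (n - 2)

open Real Filter Topology intervalIntegral

theorem tendsto_log_natCast_div_natCast : Tendsto (fun n : ℕ => log n / n) atTop (𝓝 0) := by
  simpa [Function.comp_def] using
    (tendsto_pow_log_div_mul_add_atTop 1 0 1 one_ne_zero).comp tendsto_natCast_atTop_atTop

theorem tendsto_log_div_natCast_of_bounds {r : ℕ → ℝ} {a b s : ℝ} (ha : 0 < a) (hb : 0 < b)
    (hs : 0 < s) (hr : ∀ᶠ n : ℕ in atTop, a * s ^ n / n ≤ r n ∧ r n ≤ b * n * s ^ n) :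
    Tendsto (fun n : ℕ => log (r n) / n) atTop (𝓝 (log s)) := by
  have hlim (c k : ℝ) :
      Tendsto (fun n : ℕ => log s + (c + k * log n) / n) atTop (𝓝 (log s)) := by
    have h := (tendsto_const_div_atTop_nhds_zero_nat c).add
      (tendsto_log_natCast_div_natCast.const_mul k)
    simpa [add_div, mul_div_assoc] using h.const_add (log s)
  refine tendsto_of_tendsto_of_tendsto_of_le_of_le' (hlim (log a) (-1)) (hlim (log b) 1) ?_ ?_
  all_goals
    filter_upwards [hr, eventually_ge_atTop 1] with n ⟨hlo, hhi⟩ hn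
    have hn : (0 : ℝ) < n := by exact_mod_cast hn
    have hlo_pos : 0 < a * s ^ n / n := by positivity
  · have h := log_le_log hlo_pos hlo
    rw [log_div (by positivity) hn.ne', log_mul ha.ne' (by positivity), log_pow] at h
    rw [le_div_iff₀ hn]
    field_simp
    linarith
  · have h := log_le_log (hlo_pos.trans_le hlo) hhi
    rw [log_mul (by positivity) (by positivity), log_mul hb.ne' hn.ne', log_pow] at h
    rw [div_le_iff₀ hn]
    field_simp
    linarith

theorem integral_sin_pow_le_mul_sin_pow {θ : ℝ} (hθ₀ : 0 ≤ θ) (hθ : θ ≤ π / 2) (m : ℕ) :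
    ∫ x in (0 : ℝ)..θ, sin x ^ m ≤ θ * sin θ ^ m := by
  have h := integral_mono_on hθ₀ ((continuous_sin.pow m).intervalIntegrable 0 θ)
    (intervalIntegrable_const (μ := MeasureTheory.volume)) fun x hx => pow_le_pow_left₀
      (sin_nonneg_of_mem_Icc ⟨hx.1, by linarith [hx.2, pi_pos]⟩)
      (sin_le_sin_of_le_of_le_pi_div_two (by linarith [hx.1, pi_pos]) hθ hx.2) m
  simpa using h

theorem sin_pow_succ_div_le_integral_sin_pow {θ : ℝ} (hθ₀ : 0 ≤ θ) (hθ : θ ≤ π) (m : ℕ) :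
    sin θ ^ (m + 1) / (m + 1) ≤ ∫ x in (0 : ℝ)..θ, sin x ^ m := by
  have h_eq : ∫ x in (0 : ℝ)..θ, sin x ^ m * cos x = sin θ ^ (m + 1) / (m + 1) := by
    simpa [integral_pow] using integral_sin_pow_mul_cos_pow_odd (a := 0) (b := θ) m 0
  rw [← h_eq]
  refine integral_mono_on hθ₀ (by apply Continuous.intervalIntegrable; fun_prop)
    ((continuous_sin.pow m).intervalIntegrable 0 θ) fun x hx => ?_
  have hsin : 0 ≤ sin x ^ m := pow_nonneg (sin_nonneg_of_mem_Icc ⟨hx.1, hx.2.trans hθ⟩) m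
  exact mul_le_of_le_one_right hsin (cos_le_one x)

theorem inv_succ_le_integral_sin_pow (m : ℕ) :
    1 / (m + 1) ≤ ∫ x in (0 : ℝ)..π, sin x ^ m := by
  have h := sin_pow_succ_div_le_integral_sin_pow (by positivity) (half_le_self pi_pos.le) m
  rw [sin_pi_div_two, one_pow] at h
  refine h.trans (integral_mono_interval le_rfl (by positivity) (half_le_self pi_pos.le) ?_
    ((continuous_sin.pow m).intervalIntegrable 0 π))
  filter_upwards [MeasureTheory.ae_restrict_mem measurableSet_Ioc] with x hx
  exact pow_nonneg (sin_nonneg_of_mem_Icc ⟨hx.1.le, hx.2⟩) m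

theorem integral_sin_pow_le_pi (m : ℕ) : ∫ x in (0 : ℝ)..π, sin x ^ m ≤ π := by
  simpa using integral_sin_pow_antitone (Nat.zero_le m)

theorem capC_div_capC_pi_bounds {θ : ℝ} (hθ₀ : 0 < θ) (hθ : θ ≤ π / 2) {n : ℕ} (hn : 2 ≤ n) :
    (sin θ * π)⁻¹ * sin θ ^ n / n ≤ capC n θ / capC n π ∧
      capC n θ / capC n π ≤ θ / sin θ ^ 2 * n * sin θ ^ n := by
  obtain ⟨m, rfl⟩ := Nat.exists_eq_add_of_le' hn
  simp only [capC, Nat.add_sub_cancel]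
  have hs : 0 < sin θ := sin_pos_of_pos_of_lt_pi hθ₀ (by linarith [pi_pos])
  have hN_lo := sin_pow_succ_div_le_integral_sin_pow hθ₀.le (by linarith [pi_pos]) m
  have hN_hi := integral_sin_pow_le_mul_sin_pow hθ₀.le hθ m
  have hD_lo := inv_succ_le_integral_sin_pow m
  have hD_hi := integral_sin_pow_le_pi m
  have hD_pos : 0 < ∫ x in (0 : ℝ)..π, sin x ^ m := integral_sin_pow_pos m
  have hN_nonneg : 0 ≤ ∫ x in (0 : ℝ)..θ, sin x ^ m := (by positivity : (0 : ℝ) ≤ _).trans hN_lo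
  push_cast
  constructor
  · calc (sin θ * π)⁻¹ * sin θ ^ (m + 2) / (m + 2)
          = sin θ ^ (m + 1) / (m + 1 + 1) / π := by field_simp; ring
      _ ≤ sin θ ^ (m + 1) / (m + 1) / π := by gcongr; linarith
      _ ≤ (∫ x in (0 : ℝ)..θ, sin x ^ m) / π := by gcongr
      _ ≤ (∫ x in (0 : ℝ)..θ, sin x ^ m) / ∫ x in (0 : ℝ)..π, sin x ^ m := by gcongr
  · calc (∫ x in (0 : ℝ)..θ, sin x ^ m) / ∫ x in (0 : ℝ)..π, sin x ^ m
          ≤ (∫ x in (0 : ℝ)..θ, sin x ^ m) / (1 / (m + 1)) := by gcongr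
      _ ≤ θ * sin θ ^ m * (m + 2) := by
          rw [div_div_eq_mul_div, div_one]
          gcongr
          linarith
      _ = θ / sin θ ^ 2 * (m + 2) * sin θ ^ (m + 2) := by field_simp; ring

/-- For `0 ≤ τ < 1`, `lim_{n→∞} (1/n) log₂ (C_n(arccos τ)/C_n(π)) = (1/2) log₂ (1 - τ²)`. -/
theorem stmt_2 (τ : ℝ) (hτ0 : 0 ≤ τ) (hτ1 : τ < 1) :
    Filter.Tendsto
      (fun n : ℕ => (1 / (n : ℝ)) *
        Real.logb 2 (capC n (Real.arccos τ) / capC n Real.pi))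
      Filter.atTop (nhds ((1 / 2) * Real.logb 2 (1 - τ ^ 2))) := by
  set θ := arccos τ
  have hθ₀ : 0 < θ := arccos_pos.2 hτ1
  have hθ : θ ≤ π / 2 := arccos_le_pi_div_two.2 hτ0
  have hs : 0 < sin θ := sin_pos_of_pos_of_lt_pi hθ₀ (by linarith [pi_pos])
  have h_rate : (1 / 2) * logb 2 (1 - τ ^ 2) = log (sin θ) / log 2 := by
    rw [sin_arccos, log_sqrt (by nlinarith), logb]
    ring
  have h_bounds : ∀ᶠ n : ℕ in atTop, (sin θ * π)⁻¹ * sin θ ^ n / n ≤ capC n θ / capC n π ∧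
      capC n θ / capC n π ≤ θ / sin θ ^ 2 * n * sin θ ^ n :=
    (eventually_ge_atTop 2).mono fun n hn => capC_div_capC_pi_bounds hθ₀ hθ hn
  rw [h_rate]
  refine ((tendsto_log_div_natCast_of_bounds (by positivity) (by positivity) hs
    h_bounds).div_const (log 2)).congr fun n => ?_
  rw [logb]
  ring
end

section
/- Under the constraints 0 ≤ σ_A² ≤ D_d and κ² ≤ D_e σ_U², with D_d, σ_U² > 0 and √(D_e σ_U²) < min{D_d, σ_U² σ_X²/(σ_X²+σ_U²)} ≤ min{D_d, σ_U²}, the supremum of (1/2)·log(2πe·(σ_A² σ_U² − κ²)/(σ_A² + σ_U² + 2κ)) is attained at σ_A² = D_d and κ = −√(D_e σ_U²), giving value (1/2)·log(2πe·σ_U²·(D_d − D_e)/(σ_U² + D_d − 2√(σ_U² D_e))). -/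
/-!
The ratio is the conditional variance `Var(U | A + U)` of a Gaussian pair with variances
`σ_A², σ_U²` and covariance `κ`. Cross-multiplying shows that it is nondecreasing in `σ_A²`
(the difference is `(b - a)(u + κ)²`) and, once `κ > -min(σ_A², σ_U²)`, nonincreasing in `κ`
(the difference factors through `(a + j)(u + k) + (a + k)(u + j)`). So over the feasible set,
where `-√(D_e σ_U²) ≤ κ`, the maximum sits at `σ_A² = D_d`, `κ = -√(D_e σ_U²)`.
-/

open Set

/-- `Var(U | A + U)` for a Gaussian pair `(A, U)` with `Var A = a`, `Var U = u`, `Cov(A, U) = k`. -/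
noncomputable def condVar (a u k : ℝ) : ℝ := (a * u - k ^ 2) / (a + u + 2 * k)

lemma add_add_two_mul_nonneg_of_sq_le_mul {a u k : ℝ} (ha : 0 ≤ a) (hu : 0 ≤ u)
    (hk : k ^ 2 ≤ a * u) : 0 ≤ a + u + 2 * k := by
  nlinarith [sq_nonneg (a - u), sq_nonneg (a + u + 2 * k)]

lemma condVar_nonneg {a u k : ℝ} (ha : 0 ≤ a) (hu : 0 ≤ u) (hk : k ^ 2 ≤ a * u) :
    0 ≤ condVar a u k :=
  div_nonneg (sub_nonneg.2 hk) (add_add_two_mul_nonneg_of_sq_le_mul ha hu hk)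

lemma condVar_le_condVar_of_le {a b u k : ℝ} (hpos : 0 < a + u + 2 * k) (hab : a ≤ b) :
    condVar a u k ≤ condVar b u k := by
  unfold condVar
  rw [div_le_div_iff₀ hpos (by linarith)]
  nlinarith [mul_nonneg (sub_nonneg.2 hab) (sq_nonneg (u + k))]

lemma condVar_antitoneOn (a u : ℝ) : AntitoneOn (condVar a u) (Ioi (max (-a) (-u))) := by
  intro j hj k hk hjk
  simp only [mem_Ioi, max_lt_iff] at hj hk
  unfold condVar
  rw [div_le_div_iff₀ (by linarith) (by linarith)]
  nlinarith [mul_nonneg (sub_nonneg.2 hjk)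
    (add_nonneg (mul_nonneg (by linarith : 0 ≤ a + j) (by linarith : 0 ≤ u + k))
      (mul_nonneg (by linarith : 0 ≤ a + k) (by linarith : 0 ≤ u + j)))]

lemma condVar_le_condVar_neg {a b u k s : ℝ} (hs : 0 ≤ s) (hsb : s < b) (hsu : s < u)
    (ha : 0 ≤ a) (hab : a ≤ b) (hks : k ^ 2 ≤ s ^ 2) (hka : k ^ 2 ≤ a * u) :
    condVar a u k ≤ condVar b u (-s) := by
  have hfeas : (-s) ^ 2 ≤ b * u := by nlinarith
  rcases (add_add_two_mul_nonneg_of_sq_le_mul ha (by linarith) hka).eq_or_lt with h0 | hpos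
  · rw [condVar, ← h0, div_zero]
    exact condVar_nonneg (by linarith) (by linarith) hfeas
  · have hsk : -s ≤ k := (abs_le_of_sq_le_sq' hks hs).1
    calc condVar a u k ≤ condVar b u k := condVar_le_condVar_of_le hpos hab
      _ ≤ condVar b u (-s) :=
        condVar_antitoneOn b u (by simp only [mem_Ioi, max_lt_iff]; constructor <;> linarith)
          (by simp only [mem_Ioi, max_lt_iff]; constructor <;> linarith) hsk

lemma condVar_neg_sqrt {b u e : ℝ} (heu : 0 ≤ e * u) :
    condVar b u (-Real.sqrt (e * u)) = u * (b - e) / (u + b - 2 * Real.sqrt (u * e)) := by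
  rw [condVar, neg_sq, Real.sq_sqrt heu, mul_comm u e]
  ring

theorem stmt_10_general (Dd De sU2 : ℝ) (hDe : 0 ≤ De)
    (h1 : Real.sqrt (De * sU2) < min Dd sU2) :
    -- feasibility of the maximizer
    ((-Real.sqrt (De * sU2)) ^ 2 ≤ De * sU2 ∧
      (-Real.sqrt (De * sU2)) ^ 2 ≤ Dd * sU2) ∧
    -- maximality over the feasible set
    (∀ sA2 κ : ℝ, 0 ≤ sA2 → sA2 ≤ Dd → κ ^ 2 ≤ De * sU2 → κ ^ 2 ≤ sA2 * sU2 →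
      (sA2 * sU2 - κ ^ 2) / (sA2 + sU2 + 2 * κ) ≤
        (Dd * sU2 - (-Real.sqrt (De * sU2)) ^ 2) /
          (Dd + sU2 + 2 * (-Real.sqrt (De * sU2)))) ∧
    -- the attained value
    (1 / 2) * Real.log (2 * Real.pi * Real.exp 1 *
        ((Dd * sU2 - (-Real.sqrt (De * sU2)) ^ 2) /
          (Dd + sU2 + 2 * (-Real.sqrt (De * sU2))))) =
      (1 / 2) * Real.log (2 * Real.pi * Real.exp 1 *
        (sU2 * (Dd - De) / (sU2 + Dd - 2 * Real.sqrt (sU2 * De)))) := by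
  set s := Real.sqrt (De * sU2) with hs_def
  obtain ⟨hsD, hsU⟩ := lt_min_iff.1 h1
  have hs : 0 ≤ s := Real.sqrt_nonneg _
  have hs2 : s ^ 2 = De * sU2 := Real.sq_sqrt (mul_nonneg hDe (hs.trans hsU.le))
  refine ⟨⟨by rw [neg_sq, hs2], by rw [neg_sq]; nlinarith⟩, ?_, ?_⟩
  · intro sA2 κ hA hAD hκe hκA
    exact condVar_le_condVar_neg hs hsD hsU hA hAD (hs2 ▸ hκe) hκA
  · rw [← condVar, hs_def, condVar_neg_sqrt (hs2 ▸ sq_nonneg s)]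

/-- Under the constraints `0 ≤ σ_A² ≤ D_d`, `κ² ≤ D_e σ_U²`, `κ² ≤ σ_A² σ_U²`, the
objective `(1/2) log (2πe (σ_A²σ_U² − κ²)/(σ_A² + σ_U² + 2κ))` is maximized at
`σ_A² = D_d`, `κ = −√(D_e σ_U²)` (equivalently, since `log` is monotone, the ratio
`(σ_A²σ_U² − κ²)/(σ_A² + σ_U² + 2κ)` is maximized there), giving value
`(1/2) log (2πe σ_U² (D_d − D_e)/(σ_U² + D_d − 2√(σ_U² D_e)))`. -/
theorem stmt_10 (Dd De sU2 : ℝ) (hDd : 0 < Dd) (hDe : 0 ≤ De) (hU : 0 < sU2)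
    (h1 : Real.sqrt (De * sU2) < min Dd sU2) (h2 : De < Dd) :
    -- feasibility of the maximizer
    ((-Real.sqrt (De * sU2)) ^ 2 ≤ De * sU2 ∧
      (-Real.sqrt (De * sU2)) ^ 2 ≤ Dd * sU2) ∧
    -- maximality over the feasible set
    (∀ sA2 κ : ℝ, 0 ≤ sA2 → sA2 ≤ Dd → κ ^ 2 ≤ De * sU2 → κ ^ 2 ≤ sA2 * sU2 →
      (sA2 * sU2 - κ ^ 2) / (sA2 + sU2 + 2 * κ) ≤
        (Dd * sU2 - (-Real.sqrt (De * sU2)) ^ 2) /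
          (Dd + sU2 + 2 * (-Real.sqrt (De * sU2)))) ∧
    -- the attained value
    (1 / 2) * Real.log (2 * Real.pi * Real.exp 1 *
        ((Dd * sU2 - (-Real.sqrt (De * sU2)) ^ 2) /
          (Dd + sU2 + 2 * (-Real.sqrt (De * sU2))))) =
      (1 / 2) * Real.log (2 * Real.pi * Real.exp 1 *
        (sU2 * (Dd - De) / (sU2 + Dd - 2 * Real.sqrt (sU2 * De)))) :=
  stmt_10_general Dd De sU2 hDe h1
end

section
/- Let σ_X², σ_U² > 0 and D_d, D_e ≥ 0 satisfy √(D_e σ_U²) < min{D_d, σ_X²σ_U²/(σ_X²+σ_U²)} and D_d < σ_X²(1 − √(D_e/σ_U²))² + D_e. Define b = √(D_e/σ_U²), σ_W² = σ_X²(D_d − D_e)/(σ_X²(1−b)² + D_e − D_d), and a = σ_X²(1−b)/(σ_X² + σ_W²). Then σ_W² > 0, (1−a−b)²σ_X² + a²σ_W² + b²σ_U² = D_d, b²σ_U² = D_e, and (1/2)log((σ_X²σ_U²+σ_X²σ_W²+σ_U²σ_W²)/((σ_X²+σ_U²)σ_W²)) = (1/2)log(σ_X²(σ_U² + D_d − 2√(σ_U²D_e))/((σ_X²+σ_U²)(D_d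 − D_e))). -/
/-!
With `c = 1 - b` and `D = D_d - D_e`, the noise variance is `σ_W² = σ_X² D / (σ_X² c² - D)`,
which is exactly the choice making the error `c² σ_X² σ_W² / (σ_X² + σ_W²)` of the linear
estimator `a (X + W)` of `c X` equal to `D`; the same relation turns the ratio inside the first
logarithm into the second one. The hypotheses give `b < 1` and `D_e < D_d`, so that `0 < D < σ_X² c²`.
-/

open Real

lemma sqrt_mul_eq_sqrt_div_mul {D s : ℝ} (hs : 0 ≤ s) : √(D * s) = √(D / s) * s := by
  rcases hs.eq_or_lt with rfl | hs
  · simp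
  calc √(D * s) = √(D / s * s ^ 2) := by congr 1; field_simp
    _ = √(D / s) * s := by rw [sqrt_mul' _ (sq_nonneg s), sqrt_sq hs.le]

lemma sq_sqrt_div_mul {D s : ℝ} (hD : 0 ≤ D) (hs : 0 < s) : √(D / s) ^ 2 * s = D := by
  rw [sq_sqrt (div_nonneg hD hs.le), div_mul_cancel₀ D hs.ne']

lemma lt_one_of_mul_lt_mul_div_add {b x s : ℝ} (hx : 0 < x) (hs : 0 < s)
    (h : b * s < x * s / (x + s)) : b < 1 := by
  have harmonic_lt : x * s / (x + s) < 1 * s := by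
    rw [div_lt_iff₀ (by positivity)]
    nlinarith [mul_pos hs hs]
  exact lt_of_mul_lt_mul_right (h.trans harmonic_lt) hs.le

lemma linearEstimator_error (sX2 sW2 c : ℝ) (h : sX2 + sW2 ≠ 0) :
    (c - sX2 * c / (sX2 + sW2)) ^ 2 * sX2 + (sX2 * c / (sX2 + sW2)) ^ 2 * sW2 =
      c ^ 2 * sX2 * sW2 / (sX2 + sW2) := by
  field_simp
  ring

lemma linearEstimator_error_eq {sX2 sW2 c D : ℝ} (h : sX2 + sW2 ≠ 0)
    (hW : sW2 * (sX2 * c ^ 2 - D) = sX2 * D) :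
    c ^ 2 * sX2 * sW2 / (sX2 + sW2) = D := by
  rw [div_eq_iff h]
  linear_combination hW

lemma div_eq_div_of_noiseVar {sX2 sU2 sW2 c D : ℝ} (hW0 : sW2 ≠ 0) (hD : D ≠ 0)
    (hXU : sX2 + sU2 ≠ 0) (hW : sW2 * (sX2 * c ^ 2 - D) = sX2 * D) :
    (sX2 * sU2 + sX2 * sW2 + sU2 * sW2) / ((sX2 + sU2) * sW2) =
      sX2 * (c ^ 2 * sU2 + D) / ((sX2 + sU2) * D) := by
  rw [div_eq_div_iff (mul_ne_zero hXU hW0) (mul_ne_zero hXU hD)]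
  linear_combination (-(sX2 + sU2) * sU2) * hW

theorem stmt_15_general (sX2 sU2 Dd De : ℝ) (hX : 0 < sX2) (hU : 0 < sU2)
    (hDe : 0 ≤ De)
    (h1 : Real.sqrt (De * sU2) < min Dd (sX2 * sU2 / (sX2 + sU2)))
    (h2 : Dd < sX2 * (1 - Real.sqrt (De / sU2)) ^ 2 + De)
    (b sW2 a : ℝ)
    (hb : b = Real.sqrt (De / sU2))
    (hsW : sW2 = sX2 * (Dd - De) / (sX2 * (1 - b) ^ 2 + De - Dd))
    (ha : a = sX2 * (1 - b) / (sX2 + sW2)) :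
    0 < sW2 ∧
    (1 - a - b) ^ 2 * sX2 + a ^ 2 * sW2 + b ^ 2 * sU2 = Dd ∧
    b ^ 2 * sU2 = De ∧
    (1 / 2) * Real.logb 2 ((sX2 * sU2 + sX2 * sW2 + sU2 * sW2) / ((sX2 + sU2) * sW2)) =
      (1 / 2) * Real.logb 2
        (sX2 * (sU2 + Dd - 2 * Real.sqrt (sU2 * De)) / ((sX2 + sU2) * (Dd - De))) := by
  have hb0 : 0 ≤ b := hb ▸ sqrt_nonneg _
  have hb2 : b ^ 2 * sU2 = De := hb ▸ sq_sqrt_div_mul hDe hU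
  rw [sqrt_mul_eq_sqrt_div_mul hU.le, ← hb] at h1
  rw [← hb] at h2
  have hb1 : b < 1 := lt_one_of_mul_lt_mul_div_add hX hU (h1.trans_le (min_le_right _ _))
  have hDeDd : De < Dd := by nlinarith [h1.trans_le (min_le_left _ _), mul_le_mul_of_nonneg_right hb1.le hb0]
  set c := 1 - b
  set D := Dd - De
  have hD : 0 < D := sub_pos.mpr hDeDd
  have hK : 0 < sX2 * c ^ 2 - D := by linarith
  have hsW' : sW2 = sX2 * D / (sX2 * c ^ 2 - D) := by rw [hsW]; congr 1; ring
  have hW0 : 0 < sW2 := hsW' ▸ div_pos (mul_pos hX hD) hK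
  have hW : sW2 * (sX2 * c ^ 2 - D) = sX2 * D := by rw [hsW', div_mul_cancel₀ _ hK.ne']
  refine ⟨hW0, ?_, hb2, ?_⟩
  · rw [show 1 - a - b = c - a by ring, ha, hb2,
      linearEstimator_error _ _ _ (by positivity), linearEstimator_error_eq (by positivity) hW]
    ring
  · rw [div_eq_div_of_noiseVar hW0.ne' hD.ne' (by positivity) hW, mul_comm sU2 De,
      sqrt_mul_eq_sqrt_div_mul hU.le, ← hb]
    congr 4
    linear_combination hb2

/-- Suppose `√(D_e σ_U²) < min{D_d, σ_X²σ_U²/(σ_X²+σ_U²)}` and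
`D_d < σ_X²(1 − √(D_e/σ_U²))² + D_e` (with `σ_X², σ_U² > 0`, `D_d, D_e ≥ 0`). With
`b = √(D_e/σ_U²)`, `σ_W² = σ_X²(D_d − D_e)/(σ_X²(1−b)² + D_e − D_d)` and
`a = σ_X²(1−b)/(σ_X² + σ_W²)`, one has `σ_W² > 0`,
`(1−a−b)²σ_X² + a²σ_W² + b²σ_U² = D_d`, `b²σ_U² = D_e`, and
`(1/2)log₂((σ_X²σ_U²+σ_X²σ_W²+σ_U²σ_W²)/((σ_X²+σ_U²)σ_W²))
 = (1/2)log₂(σ_X²(σ_U² + D_d − 2√(σ_U²D_e))/((σ_X²+σ_U²)(D_d − D_e)))`. -/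
theorem stmt_15 (sX2 sU2 Dd De : ℝ) (hX : 0 < sX2) (hU : 0 < sU2)
    (hDd : 0 ≤ Dd) (hDe : 0 ≤ De)
    (h1 : Real.sqrt (De * sU2) < min Dd (sX2 * sU2 / (sX2 + sU2)))
    (h2 : Dd < sX2 * (1 - Real.sqrt (De / sU2)) ^ 2 + De)
    (b sW2 a : ℝ)
    (hb : b = Real.sqrt (De / sU2))
    (hsW : sW2 = sX2 * (Dd - De) / (sX2 * (1 - b) ^ 2 + De - Dd))
    (ha : a = sX2 * (1 - b) / (sX2 + sW2)) :
    0 < sW2 ∧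
    (1 - a - b) ^ 2 * sX2 + a ^ 2 * sW2 + b ^ 2 * sU2 = Dd ∧
    b ^ 2 * sU2 = De ∧
    (1 / 2) * Real.logb 2 ((sX2 * sU2 + sX2 * sW2 + sU2 * sW2) / ((sX2 + sU2) * sW2)) =
      (1 / 2) * Real.logb 2
        (sX2 * (sU2 + Dd - 2 * Real.sqrt (sU2 * De)) / ((sX2 + sU2) * (Dd - De))) :=
  stmt_15_general sX2 sU2 Dd De hX hU hDe h1 h2 b sW2 a hb hsW ha
end
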